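/- arXiv:2507.13129 — 2 statements merged into one kernel-verified Lean document; each statement's English description precedes it below -/
import Mathlib

section
/- For an integer m ≥ 3, the non-adjacency witness number of the cycle C_m equals 3 if m ∈ {3,6}, and equals 2 otherwise. -/
/-- A set of vertices `T` has no common neighbor in `G`. -/
def SimpleGraph.NoCommonNbr {V : Type*} (G : SimpleGraph V) (T : Finset V) : Prop :=
  ¬ ∃ v : V, ∀ t ∈ T, G.Adj v t

/-- `q` witnesses the non-adjacency witness property for `G`. -/
def SimpleGraph.HasNAW {V : Type*} (G : SimpleGraph V) (q : ℕ) : Prop :=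
  0 < q ∧ ∀ T : Finset V, G.NoCommonNbr T →
    ∃ T' ⊆ T, T'.card ≤ q ∧ G.NoCommonNbr T'

/-- The non-adjacency witness number `q(G)`: the smallest positive integer `q` such that
every vertex set with no common neighbor contains a subset of size at most `q`
with no common neighbor. -/
noncomputable def SimpleGraph.nawn {V : Type*} (G : SimpleGraph V) : ℕ :=
  sInf {q | G.HasNAW q}

/-- The cycle graph on `m` vertices, realized on `ZMod m`. -/
def cycleGraph (m : ℕ) : SimpleGraph (ZMod m) where
  Adj u v := u ≠ v ∧ (u - v = 1 ∨ v - u = 1)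
  symm := ⟨fun _ _ h => ⟨h.1.symm, h.2.symm⟩⟩
  loopless := ⟨fun _ h => h.1 rfl⟩

/-!
In `C_m` two distinct vertices have a common neighbor exactly when they differ by `±2`, and no
three vertices have one since all degrees are `2`; this gives the bound `3`. Three distinct
vertices pairwise differing by `±2` exist only when `6 = 0` in `ZMod m`, i.e. `m ∈ {3, 6}`, where
`{0, 2, 4}` shows that the bound is attained. Otherwise every set without a common neighbor
contains a pair without one, and `{0, 1}` shows that single vertices do not suffice.
-/

namespace SimpleGraph

variable {V : Type*} {G : SimpleGraph V}

theorem HasNAW.mono {q q' : ℕ} (h : G.HasNAW q) (hq : q ≤ q') :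
    G.HasNAW q' := by
  obtain ⟨hpos, hwit⟩ := h
  refine ⟨hpos.trans_le hq, fun T hT => ?_⟩
  obtain ⟨T', hsub, hcard, hT'⟩ := hwit T hT
  exact ⟨T', hsub, hcard.trans hq, hT'⟩

theorem nawn_eq_of_hasNAW_of_not_hasNAW {q : ℕ} (h : G.HasNAW (q + 1))
    (h' : ¬ G.HasNAW q) : G.nawn = q + 1 := by
  refine le_antisymm (Nat.sInf_le h) (le_csInf ⟨_, h⟩ fun q' hq' => ?_)
  by_contra! hlt
  exact h' (hq'.mono (Nat.lt_succ_iff.mp hlt))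

variable (G) [Fintype V] [DecidableRel G.Adj]

theorem noCommonNbr_of_maxDegree_lt_card {T : Finset V} (hT : G.maxDegree < T.card) :
    G.NoCommonNbr T := by
  rintro ⟨v, hv⟩
  have hsub : T ⊆ G.neighborFinset v := fun t ht => (G.mem_neighborFinset v t).mpr (hv t ht)
  have := (Finset.card_le_card hsub).trans (G.degree_le_maxDegree v)
  omega

theorem hasNAW_maxDegree_add_one : G.HasNAW (G.maxDegree + 1) := by
  refine ⟨Nat.succ_pos _, fun T hT => ?_⟩
  by_cases hcard : T.card ≤ G.maxDegree + 1
  · exact ⟨T, subset_rfl, hcard, hT⟩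
  · obtain ⟨T', hsub, hcard'⟩ := Finset.exists_subset_card_eq (not_le.mp hcard).le
    exact ⟨T', hsub, hcard'.le, G.noCommonNbr_of_maxDegree_lt_card (by omega)⟩

end SimpleGraph

theorem six_eq_zero_of_pairwise_eq_two_or_neg_two {R : Type*} [CommRing R] {x y : R} (hxy : x ≠ y)
    (hx : x = 2 ∨ x = -2) (hy : y = 2 ∨ y = -2) (hyx : y - x = 2 ∨ y - x = -2) :
    (6 : R) = 0 := by
  rcases hx with rfl | rfl <;> rcases hy with rfl | rfl <;> rcases hyx with h | h
  all_goals first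
    | exact absurd rfl hxy
    | linear_combination h
    | linear_combination -h
    | linear_combination 3 * h
    | linear_combination -3 * h

instance (m : ℕ) : DecidableRel (cycleGraph m).Adj :=
  fun u v => inferInstanceAs (Decidable (u ≠ v ∧ (u - v = 1 ∨ v - u = 1)))

section CycleGraph

variable {m : ℕ}

theorem cycleGraph_maxDegree_le_two [NeZero m] : (cycleGraph m).maxDegree ≤ 2 := by
  refine SimpleGraph.maxDegree_le_of_forall_degree_le _ _ fun v => ?_
  have hsub : (cycleGraph m).neighborFinset v ⊆ {v - 1, v + 1} := by
    intro w hw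
    obtain ⟨-, h | h⟩ := ((cycleGraph m).mem_neighborFinset v w).mp hw
    · exact Finset.mem_insert.mpr (Or.inl (by linear_combination -h))
    · exact Finset.mem_insert_of_mem (Finset.mem_singleton.mpr (by linear_combination h))
  exact (Finset.card_le_card hsub).trans Finset.card_le_two

theorem cycleGraph_adj_add_one (h1 : (1 : ZMod m) ≠ 0) (u : ZMod m) :
    (cycleGraph m).Adj u (u + 1) :=
  ⟨fun h => h1 (by linear_combination -h), Or.inr (by ring)⟩

theorem cycleGraph_sub_eq_two_of_adj {v a b : ZMod m} (ha : (cycleGraph m).Adj v a)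
    (hb : (cycleGraph m).Adj v b) (hab : a ≠ b) : b - a = 2 ∨ b - a = -2 := by
  obtain ⟨-, ha | ha⟩ := ha <;> obtain ⟨-, hb | hb⟩ := hb
  · exact absurd (by linear_combination hb - ha) hab
  · exact Or.inl (by linear_combination ha + hb)
  · exact Or.inr (by linear_combination -ha - hb)
  · exact absurd (by linear_combination ha - hb) hab

theorem cycleGraph_noCommonNbr_pair_iff (h1 : (1 : ZMod m) ≠ 0) {a b : ZMod m} (hab : a ≠ b) :
    (cycleGraph m).NoCommonNbr {a, b} ↔ ¬ (b - a = 2 ∨ b - a = -2) := by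
  refine not_congr ⟨fun ⟨v, hv⟩ =>
    cycleGraph_sub_eq_two_of_adj (hv a (by simp)) (hv b (by simp)) hab, ?_⟩
  rintro (h | h)
  · refine ⟨a + 1, ?_⟩
    simp only [Finset.mem_insert, Finset.mem_singleton, forall_eq_or_imp, forall_eq]
    have hb : b = a + 1 + 1 := by linear_combination h
    exact ⟨(cycleGraph_adj_add_one h1 a).symm, hb ▸ cycleGraph_adj_add_one h1 (a + 1)⟩
  · refine ⟨b + 1, ?_⟩
    simp only [Finset.mem_insert, Finset.mem_singleton, forall_eq_or_imp, forall_eq]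
    have ha : a = b + 1 + 1 := by linear_combination -h
    exact ⟨ha ▸ cycleGraph_adj_add_one h1 (b + 1), (cycleGraph_adj_add_one h1 b).symm⟩

theorem cycleGraph_not_noCommonNbr_of_card_le_two (h1 : (1 : ZMod m) ≠ 0) {T : Finset (ZMod m)}
    (hT : T.card ≤ 2) (hpair : ∀ a ∈ T, ∀ b ∈ T, a ≠ b → b - a = 2 ∨ b - a = -2) :
    ¬ (cycleGraph m).NoCommonNbr T := by
  interval_cases hcard : T.card
  · exact not_not.mpr ⟨0, by simp [Finset.card_eq_zero.mp hcard]⟩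
  · obtain ⟨a, rfl⟩ := Finset.card_eq_one.mp hcard
    exact not_not.mpr ⟨a + 1, by simpa using (cycleGraph_adj_add_one h1 a).symm⟩
  · obtain ⟨a, b, hab, rfl⟩ := Finset.card_eq_two.mp hcard
    rw [cycleGraph_noCommonNbr_pair_iff h1 hab, not_not]
    exact hpair a (by simp) b (by simp) hab

theorem cycleGraph_six_eq_zero_of_triangle {a b c : ZMod m} (hab : a ≠ b) (hac : a ≠ c)
    (hbc : b ≠ c) (h₁ : ¬ (cycleGraph m).NoCommonNbr {a, b})
    (h₂ : ¬ (cycleGraph m).NoCommonNbr {a, c}) (h₃ : ¬ (cycleGraph m).NoCommonNbr {b, c}) :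
    (6 : ZMod m) = 0 := by
  have dist_two : ∀ {x y : ZMod m}, x ≠ y → ¬ (cycleGraph m).NoCommonNbr {x, y} →
      y - x = 2 ∨ y - x = -2 := fun hxy h => by
    obtain ⟨v, hv⟩ := not_not.mp h
    exact cycleGraph_sub_eq_two_of_adj (hv _ (by simp)) (hv _ (by simp)) hxy
  refine six_eq_zero_of_pairwise_eq_two_or_neg_two (fun h => hbc (sub_left_inj.mp h))
    (dist_two hab h₁) (dist_two hac h₂) ?_
  rw [sub_sub_sub_cancel_right]
  exact dist_two hbc h₃

theorem cycleGraph_hasNAW_two (h6 : (6 : ZMod m) ≠ 0) : (cycleGraph m).HasNAW 2 := by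
  refine ⟨two_pos, fun T hT => ?_⟩
  by_cases hcard : T.card ≤ 2
  · exact ⟨T, subset_rfl, hcard, hT⟩
  obtain ⟨a, ha, b, hb, c, hc, hab, hac, hbc⟩ := Finset.two_lt_card.mp (not_le.mp hcard)
  have pair_mem : ∀ {x y}, x ∈ T → y ∈ T → ({x, y} : Finset (ZMod m)) ⊆ T := fun hx hy =>
    Finset.insert_subset hx (Finset.singleton_subset_iff.mpr hy)
  by_contra! hno
  refine h6 (cycleGraph_six_eq_zero_of_triangle hab hac hbc ?_ ?_ ?_)
  · exact fun h => hno _ (pair_mem ha hb) Finset.card_le_two h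
  · exact fun h => hno _ (pair_mem ha hc) Finset.card_le_two h
  · exact fun h => hno _ (pair_mem hb hc) Finset.card_le_two h

theorem cycleGraph_not_hasNAW_one (h3 : (3 : ZMod m) ≠ 0) : ¬ (cycleGraph m).HasNAW 1 := by
  have h1 : (1 : ZMod m) ≠ 0 := fun h => h3 (by linear_combination 3 * h)
  have h01 : (0 : ZMod m) ≠ 1 := fun h => h1 h.symm
  rintro ⟨-, hwit⟩
  have hT : (cycleGraph m).NoCommonNbr {0, 1} := by
    rw [cycleGraph_noCommonNbr_pair_iff h1 h01]
    rintro (h | h)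
    · exact h1 (by linear_combination -h)
    · exact h3 (by linear_combination h)
  obtain ⟨T', -, hcard, hT'⟩ := hwit _ hT
  refine cycleGraph_not_noCommonNbr_of_card_le_two h1 (hcard.trans one_le_two) ?_ hT'
  intro a ha b hb hab
  exact absurd (Finset.card_le_one.mp hcard a ha b hb) hab

theorem cycleGraph_not_hasNAW_two [NeZero m] (h2 : (2 : ZMod m) ≠ 0) (h6 : (6 : ZMod m) = 0) :
    ¬ (cycleGraph m).HasNAW 2 := by
  have h1 : (1 : ZMod m) ≠ 0 := fun h => h2 (by linear_combination 2 * h)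
  have h4 : (4 : ZMod m) ≠ 0 := fun h => h2 (by linear_combination h6 - h)
  have hcard : ({0, 2, 4} : Finset (ZMod m)).card = 3 := Finset.card_eq_three.mpr
    ⟨0, 2, 4, h2.symm, h4.symm, fun h => h2 (by linear_combination -h), rfl⟩
  rintro ⟨-, hwit⟩
  obtain ⟨T', hsub, hcard', hT'⟩ := hwit {0, 2, 4} <|
    (cycleGraph m).noCommonNbr_of_maxDegree_lt_card <| by
      rw [hcard]; exact cycleGraph_maxDegree_le_two.trans_lt (by norm_num)
  refine cycleGraph_not_noCommonNbr_of_card_le_two h1 hcard' (fun a ha b hb hab => ?_) hT'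
  have hmem : ∀ x ∈ T', x = 0 ∨ x = 2 ∨ x = 4 := fun x hx => by simpa using hsub hx
  rcases hmem a ha with rfl | rfl | rfl <;> rcases hmem b hb with rfl | rfl | rfl
  all_goals first
    | exact absurd rfl hab
    | (left; linear_combination)
    | (right; linear_combination)
    | (left; linear_combination -h6)
    | (right; linear_combination h6)

theorem cycleGraph_nawn_of_six_ne_zero (h6 : (6 : ZMod m) ≠ 0) : (cycleGraph m).nawn = 2 :=
  SimpleGraph.nawn_eq_of_hasNAW_of_not_hasNAW (cycleGraph_hasNAW_two h6)
    (cycleGraph_not_hasNAW_one fun h3 => h6 (by linear_combination 2 * h3))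

theorem cycleGraph_nawn_of_six_eq_zero [NeZero m] (h2 : (2 : ZMod m) ≠ 0)
    (h6 : (6 : ZMod m) = 0) : (cycleGraph m).nawn = 3 :=
  SimpleGraph.nawn_eq_of_hasNAW_of_not_hasNAW
    ((cycleGraph m).hasNAW_maxDegree_add_one.mono (Nat.succ_le_succ cycleGraph_maxDegree_le_two))
    (cycleGraph_not_hasNAW_two h2 h6)

end CycleGraph

theorem ZMod.six_eq_zero_iff {m : ℕ} (hm : 3 ≤ m) : (6 : ZMod m) = 0 ↔ m = 3 ∨ m = 6 := by
  rw [← Nat.cast_ofNat, ZMod.natCast_eq_zero_iff]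
  constructor
  · intro hd
    have := Nat.le_of_dvd (by norm_num) hd
    interval_cases m <;> simp_all
  · rintro (rfl | rfl) <;> norm_num

theorem statement2 (m : ℕ) (hm : 3 ≤ m) :
    (cycleGraph m).nawn = if m = 3 ∨ m = 6 then 3 else 2 := by
  split_ifs with h
  · have : NeZero m := ⟨by omega⟩
    have h2 : (2 : ZMod m) ≠ 0 := by
      rw [← Nat.cast_ofNat, Ne, ZMod.natCast_eq_zero_iff]
      exact Nat.not_dvd_of_pos_of_lt two_pos (by omega)
    exact cycleGraph_nawn_of_six_eq_zero h2 ((ZMod.six_eq_zero_iff hm).mpr h)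
  · exact cycleGraph_nawn_of_six_ne_zero (mt (ZMod.six_eq_zero_iff hm).mp h)
end

section
/- Let G be a graph and let G' be a core of G. Then q(G') ≤ q(G), where q denotes the non-adjacency witness number. -/
/-!
Compose the homomorphisms `f : G' → G` and `g : G → G'` to an endomorphism `e = g ∘ f` of the
core `G'`. The image of any endomorphism of `G'` induces a graph homomorphically equivalent to
`G`, so by minimality `e` is onto, hence a permutation of the finite set `V'`, and some power
`e ^ n`, `n ≥ 1`, is the identity. Thus `r = e ^ (n - 1) ∘ g : G → G'` is a retraction onto
the copy `f(G')` of `G'`.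

Witness sets transfer along such a retraction: if `T ⊆ V'` has no common neighbour in `G'`,
then neither has `f(T)` in `G`, so some `S ⊆ f(T)` with `|S| ≤ q(G)` has no common neighbour,
and then `r(S) ⊆ T` has none in `G'`, because `f(r(S)) = S`.
-/

namespace SimpleGraph

variable {V W : Type*} {G : SimpleGraph V} {H : SimpleGraph W}

theorem NoCommonNbr.of_image [DecidableEq W] {T : Finset V} (φ : G →g H)
    (hT : H.NoCommonNbr (T.image φ)) : G.NoCommonNbr T := by
  rintro ⟨v, hv⟩
  exact hT ⟨φ v, by simpa using fun t ht ↦ φ.map_adj (hv t ht)⟩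

theorem HasNAW.of_leftInverse {q : ℕ} (hG : G.HasNAW q) (f : H →g G) (r : G →g H)
    (hrf : Function.LeftInverse r f) : H.HasNAW q := by
  classical
  refine ⟨hG.1, fun T hT ↦ ?_⟩
  have hfT : G.NoCommonNbr (T.image f) :=
    .of_image r (by rwa [Finset.image_image, hrf.comp_eq_id, Finset.image_id])
  obtain ⟨S, hST, hcard, hS⟩ := hG.2 _ hfT
  have hfr : ∀ s ∈ S, f (r s) = s := fun s hs ↦ by
    obtain ⟨t, -, rfl⟩ := Finset.mem_image.mp (hST hs)
    rw [hrf t]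
  refine ⟨S.image r, ?_, Finset.card_image_le.trans hcard, .of_image f ?_⟩
  · intro t ht
    obtain ⟨s, hs, rfl⟩ := Finset.mem_image.mp ht
    obtain ⟨t, htT, rfl⟩ := Finset.mem_image.mp (hST hs)
    rwa [hrf t]
  · rwa [Finset.image_image, Finset.image_congr (f := f ∘ r) (g := id) hfr, Finset.image_id]

theorem hasNAW_card_add_one [Fintype V] (G : SimpleGraph V) : G.HasNAW (Fintype.card V + 1) :=
  ⟨Nat.succ_pos _, fun T hT ↦ ⟨T, subset_rfl, T.card_le_univ.trans (Nat.le_succ _), hT⟩⟩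

theorem hasNAW_nawn [Fintype V] (G : SimpleGraph V) : G.HasNAW G.nawn :=
  Nat.sInf_mem (s := {q | G.HasNAW q}) ⟨_, G.hasNAW_card_add_one⟩

theorem nawn_le_of_leftInverse [Fintype V] (f : H →g G) (r : G →g H)
    (hrf : Function.LeftInverse r f) : H.nawn ≤ G.nawn :=
  Nat.sInf_le (G.hasNAW_nawn.of_leftInverse f r hrf)

theorem Hom.coe_pow (e : G →g G) (n : ℕ) : ⇑(e ^ n) = (⇑e)^[n] := by
  induction n with
  | zero => rfl
  | succ n ih => rw [pow_succ, RelHom.coe_mul, ih, Function.iterate_succ]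

theorem Hom.exists_mul_eq_one_of_bijective [Finite V] (e : G →g G)
    (he : Function.Bijective e) : ∃ r : G →g G, r * e = 1 := by
  obtain ⟨n, hn, hσ⟩ := (isOfFinOrder_of_finite (Equiv.ofBijective e he)).exists_pow_eq_one
  refine ⟨e ^ (n - 1), DFunLike.ext' ?_⟩
  rw [pow_sub_one_mul hn.ne', Hom.coe_pow, RelHom.coe_one]
  exact congrArg DFunLike.coe hσ

theorem Hom.surjective_of_forall_card_le {V' : Type} [Fintype V'] {G' : SimpleGraph V'}
    (e : G' →g G') (f : G' →g G) (g : G →g G')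
    (hmin : ∀ (W : Type) [Fintype W] (H : SimpleGraph W),
      Nonempty (G →g H) → Nonempty (H →g G) → Fintype.card V' ≤ Fintype.card W) :
    Function.Surjective e := by
  classical
  have hcard : Fintype.card V' ≤ Fintype.card (Set.range e) :=
    hmin _ (G'.induce (Set.range e))
      ⟨⟨fun v ↦ ⟨e (g v), Set.mem_range_self _⟩,
        fun hvw ↦ e.map_adj (g.map_adj hvw)⟩⟩
      ⟨f.comp (Embedding.induce _).toHom⟩
  rw [← Set.range_eq_univ]
  exact Set.eq_of_subset_of_card_le (Set.subset_univ _) (by simpa using hcard)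

end SimpleGraph

theorem statement9 {V V' : Type} [Fintype V] [Fintype V']
    (G : SimpleGraph V) (G' : SimpleGraph V')
    (hto : Nonempty (G →g G')) (hfrom : Nonempty (G' →g G))
    (hmin : ∀ (W : Type) [Fintype W] (H : SimpleGraph W),
      Nonempty (G →g H) → Nonempty (H →g G) → Fintype.card V' ≤ Fintype.card W) :
    G'.nawn ≤ G.nawn := by
  obtain ⟨g⟩ := hto
  obtain ⟨f⟩ := hfrom
  have hsurj : Function.Surjective (g.comp f) := (g.comp f).surjective_of_forall_card_le f g hmin
  obtain ⟨k, hk⟩ := (g.comp f).exists_mul_eq_one_of_bijective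
    ⟨Finite.injective_iff_surjective.mpr hsurj, hsurj⟩
  exact SimpleGraph.nawn_le_of_leftInverse f (k.comp g) fun x ↦ DFunLike.congr_fun hk x
end
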